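/- (Chainswapping.) Let k ≥ 1, let φ be a Boolean function on V = {0,...,k}, and let ν ≠ ν' be two valuations such that there is a simple path ν = ν_0 − ν_1 − ... − ν_n − ν_{n+1} = ν' from ν to ν' in the hypercube graph G_V, with n ≥ 0 and ν_i ∉ sat(φ) for all 1 ≤ i ≤ n. If (−1)^{|ν|} = (−1)^{|ν'|} and ν ∈ sat(φ) and ν' ∉ sat(φ), then the Boolean function φ' defined by sat(φ') = (sat(φ) \ {ν}) ∪ {ν'} satisfies φ →±* φ' (in particular φ ≃ φ'). -/

import Mathlib

open scoped Classical

/-- Flip the membership of variable `l` in valuation `ν`. -/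
def flipV {k : ℕ} (ν : Finset (Fin (k + 1))) (l : Fin (k + 1)) : Finset (Fin (k + 1)) :=
  if l ∈ ν then ν.erase l else insert l ν

lemma flipV_flipV {k : ℕ} (ν : Finset (Fin (k + 1))) (l : Fin (k + 1)) :
    flipV (flipV ν l) l = ν := by
  unfold flipV
  by_cases h : l ∈ ν
  · simp [h, Finset.insert_erase h]
  · simp [h, Finset.erase_insert h]

lemma flipV_ne {k : ℕ} (ν : Finset (Fin (k + 1))) (l : Fin (k + 1)) :
    flipV ν l ≠ ν := by
  unfold flipV
  by_cases h : l ∈ ν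
  · simp only [h, if_true]
    intro he
    exact (Finset.notMem_erase l ν) (he.symm ▸ h)
  · simp only [h, if_false]
    intro he
    exact h (he ▸ Finset.mem_insert_self l ν)

/-- `φ →+ φ'`: there are `ν, l` with `ν ∉ sat(φ)`, `ν^(l) ∉ sat(φ)` and
`sat(φ') = sat(φ) ∪ {ν, ν^(l)}`. -/
def StepPlus (k : ℕ) (φ φ' : Finset (Fin (k + 1)) → Bool) : Prop :=
  ∃ (ν : Finset (Fin (k + 1))) (l : Fin (k + 1)),
    φ ν = false ∧ φ (flipV ν l) = false ∧
    ∀ μ, (φ' μ = true ↔ φ μ = true ∨ μ = ν ∨ μ = flipV ν l)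

/-- `φ →− φ'`: remove two adjacent satisfying valuations. -/
def StepMinus (k : ℕ) (φ φ' : Finset (Fin (k + 1)) → Bool) : Prop :=
  StepPlus k φ' φ

/-- `φ →± φ'`. -/
def StepPM (k : ℕ) (φ φ' : Finset (Fin (k + 1)) → Bool) : Prop :=
  StepPlus k φ φ' ∨ StepMinus k φ φ'

/-- The relation `≃` (equivalently `→±*`): the reflexive transitive closure of `→±`. -/
def EquivPM (k : ℕ) (φ φ' : Finset (Fin (k + 1)) → Bool) : Prop :=
  Relation.ReflTransGen (StepPM k) φ φ'

/-- The hypercube graph `G_V` on the valuations of `V = {0,...,k}`: there is an edge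
between `ν` and `ν^(l)` for every valuation `ν` and variable `l`. -/
def hypercube (k : ℕ) : SimpleGraph (Finset (Fin (k + 1))) where
  Adj ν μ := ∃ l, μ = flipV ν l
  symm := by
    constructor
    rintro ν μ ⟨l, rfl⟩
    exact ⟨l, (flipV_flipV ν l).symm⟩
  loopless := by
    constructor
    rintro ν ⟨l, h⟩
    exact flipV_ne ν l h.symm

/-!
Two moves `φ →+ φ ∪ {ν₁, ν₂}` and `φ ∪ {ν₁, ν₂} →− (φ \ {ν₀}) ∪ {ν₂}` shift a satisfying
valuation `ν₀` two edges along a walk `ν₀ − ν₁ − ν₂` through unsatisfying valuations. Each edge of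
`G_V` flips the parity of `|ν|`, so a walk between valuations of equal parity has even length and
is used up by such double steps.
-/

open Relation

def relocate {α : Type*} [DecidableEq α] (φ : α → Bool) (a b : α) : α → Bool :=
  fun μ => decide ((φ μ = true ∧ μ ≠ a) ∨ μ = b)

section Relocate

variable {α : Type*} [DecidableEq α] {φ : α → Bool} {a b c μ : α}

theorem relocate_eq_true : relocate φ a b μ = true ↔ (φ μ = true ∧ μ ≠ a) ∨ μ = b := by
  simp [relocate]

theorem relocate_self (ha : φ a = true) : relocate φ a a = φ := by
  funext μ
  rw [Bool.eq_iff_iff, relocate_eq_true]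
  by_cases h : μ = a <;> simp_all

theorem relocate_relocate (hb : b ≠ a → φ b = false) :
    relocate (relocate φ a b) b c = relocate φ a c := by
  funext μ
  rw [Bool.eq_iff_iff]
  simp only [relocate_eq_true]
  by_cases h : μ = b <;> by_cases h' : μ = a <;> simp_all

end Relocate

section Hypercube

variable {k : ℕ}

theorem neg_one_pow_card_flipV (ν : Finset (Fin (k + 1))) (l : Fin (k + 1)) :
    (-1 : ℤ) ^ (flipV ν l).card = -(-1) ^ ν.card := by
  unfold flipV
  split_ifs with h
  · rw [← Finset.card_erase_add_one h, pow_succ]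
    ring
  · rw [Finset.card_insert_of_notMem h, pow_succ]
    ring

theorem neg_one_pow_card_of_adj {ν μ : Finset (Fin (k + 1))} (h : (hypercube k).Adj ν μ) :
    (-1 : ℤ) ^ μ.card = -(-1) ^ ν.card := by
  obtain ⟨l, rfl⟩ := h
  exact neg_one_pow_card_flipV ν l

theorem stepPlus_of_adj {φ φ' : Finset (Fin (k + 1)) → Bool} {ν μ : Finset (Fin (k + 1))}
    (h : (hypercube k).Adj ν μ) (hν : φ ν = false) (hμ : φ μ = false)
    (hφ' : ∀ ρ, φ' ρ = true ↔ φ ρ = true ∨ ρ = ν ∨ ρ = μ) : StepPlus k φ φ' := by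
  obtain ⟨l, rfl⟩ := h
  exact ⟨ν, l, hν, hμ, hφ'⟩

theorem reflTransGen_relocate_of_adj_adj {φ : Finset (Fin (k + 1)) → Bool}
    {ν₀ ν₁ ν₂ : Finset (Fin (k + 1))} (h₁ : (hypercube k).Adj ν₀ ν₁)
    (h₂ : (hypercube k).Adj ν₁ ν₂) (hν₀ : φ ν₀ = true) (hν₁ : φ ν₁ = false)
    (hν₂ : ν₂ ≠ ν₀ → φ ν₂ = false) :
    ReflTransGen (StepPM k) φ (relocate φ ν₀ ν₂) := by
  by_cases h₀₂ : ν₂ = ν₀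
  · subst h₀₂
    rw [relocate_self hν₀]
  let ψ : Finset (Fin (k + 1)) → Bool := fun μ => decide (φ μ = true ∨ μ = ν₁ ∨ μ = ν₂)
  have add : StepPlus k φ ψ := stepPlus_of_adj h₂ hν₁ (hν₂ h₀₂) (by simp [ψ])
  have remove : StepMinus k ψ (relocate φ ν₀ ν₂) := by
    refine stepPlus_of_adj h₁ (by simp [relocate, Ne.symm h₀₂]) ?_ fun μ => ?_
    · simp [relocate, hν₁, h₂.ne]
    · by_cases h : μ = ν₀
      · subst h
        simp [ψ, relocate_eq_true, hν₀]
      · simp only [ψ, decide_eq_true_iff, relocate_eq_true, h]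
        tauto
  exact .tail (.single (.inl add)) (.inr remove)

theorem reflTransGen_relocate_of_walk {φ : Finset (Fin (k + 1)) → Bool} :
    ∀ {ν ν' : Finset (Fin (k + 1))} (p : (hypercube k).Walk ν ν'), φ ν = true →
      (∀ μ ∈ p.support, μ ≠ ν → φ μ = false) →
      (-1 : ℤ) ^ ν.card = (-1) ^ ν'.card →
      ReflTransGen (StepPM k) φ (relocate φ ν ν')
  | _, _, .nil, hν, _, _ => by rw [relocate_self hν]
  | _, _, .cons h .nil, _, _, hpar => by
    rw [neg_one_pow_card_of_adj h, self_eq_neg] at hpar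
    exact absurd hpar Int.neg_one_pow_ne_zero
  | ν, ν', .cons h₁ (.cons (v := ν₂) h₂ q), hν, hp, hpar => by
    have hp_q : ∀ μ ∈ q.support, μ ≠ ν → φ μ = false := fun μ hμ =>
      hp μ (by simp [hμ])
    have shift := reflTransGen_relocate_of_adj_adj h₁ h₂ hν
      (hp _ (by simp) h₁.ne.symm) (hp_q ν₂ q.start_mem_support)
    rw [← relocate_relocate (c := ν') (hp_q ν₂ q.start_mem_support)]
    refine shift.trans (reflTransGen_relocate_of_walk q (relocate_eq_true.2 (.inr rfl))
      (fun μ hμ hμ₂ => ?_) ?_)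
    · by_cases hμν : μ = ν
      · subst hμν
        simp [relocate, hμ₂]
      · simp [relocate, hμ₂, hp_q μ hμ hμν]
    · rw [← hpar, neg_one_pow_card_of_adj h₂, neg_one_pow_card_of_adj h₁, neg_neg]

end Hypercube

theorem stmt8_general (k : ℕ) (φ φ' : Finset (Fin (k + 1)) → Bool)
    (ν ν' : Finset (Fin (k + 1)))
    (p : (hypercube k).Walk ν ν')
    (hint : ∀ μ ∈ p.support, μ ≠ ν → μ ≠ ν' → φ μ = false)
    (hpar : ((-1 : ℤ) ^ ν.card = (-1 : ℤ) ^ ν'.card))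
    (hν : φ ν = true) (hν' : φ ν' = false)
    (hφ' : ∀ μ, φ' μ = true ↔ ((φ μ = true ∧ μ ≠ ν) ∨ μ = ν')) :
    Relation.ReflTransGen (StepPM k) φ φ' := by
  have hφ'_eq : φ' = relocate φ ν ν' := by
    funext μ
    rw [Bool.eq_iff_iff, hφ', relocate_eq_true]
  have hp : ∀ μ ∈ p.support, μ ≠ ν → φ μ = false := fun μ hμ hμν => by
    by_cases hμν' : μ = ν'
    · rwa [hμν']
    · exact hint μ hμ hμν hμν'
  rw [hφ'_eq]
  exact reflTransGen_relocate_of_walk p hν hp hpar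

/-- Chainswapping: if there is a simple path from `ν` to `ν'` in `G_V` whose
internal vertices do not satisfy `φ`, with `(-1)^{|ν|} = (-1)^{|ν'|}`, `ν ∈ sat(φ)` and
`ν' ∉ sat(φ)`, then the function `φ'` with `sat(φ') = (sat(φ) \ {ν}) ∪ {ν'}` satisfies
`φ →±* φ'`. -/
theorem stmt8 (k : ℕ) (hk : 1 ≤ k) (φ φ' : Finset (Fin (k + 1)) → Bool)
    (ν ν' : Finset (Fin (k + 1))) (hne : ν ≠ ν')
    (p : (hypercube k).Walk ν ν') (hpath : p.IsPath)
    (hint : ∀ μ ∈ p.support, μ ≠ ν → μ ≠ ν' → φ μ = false)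
    (hpar : ((-1 : ℤ) ^ ν.card = (-1 : ℤ) ^ ν'.card))
    (hν : φ ν = true) (hν' : φ ν' = false)
    (hφ' : ∀ μ, φ' μ = true ↔ ((φ μ = true ∧ μ ≠ ν) ∨ μ = ν')) :
    Relation.ReflTransGen (StepPM k) φ φ' :=
  stmt8_general k φ φ' ν ν' p hint hpar hν hν' hφ'
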